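/- The explicit matrix elements of the 3d R matrix enjoy the symmetries R^{n'₁,n'₂,n'₃}_{n₁,n₂,n₃} = R^{n₁,n₂,n₃}_{n'₁,n'₂,n'₃} = R^{n'₃,n'₂,n'₁}_{n₃,n₂,n₁}. -/

import Mathlib

noncomputable def qPoch (a q : ℝ) (m : ℕ) : ℝ := ∏ i ∈ Finset.range m, (1 - a * q ^ i)

/-- The reduced matrix element `R̄^{n'₁,n'₂,n'₃}_{n₁,n₂,n₃}`. -/
noncomputable def Rbar (p : ℝ) (n1 n2 n3 n1' n2' n3' : ℕ) : ℝ :=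
  (-1) ^ n2' * p ^ (n1 * n3 + n2' * (n1 + n3 + 1)) / qPoch (p ^ 2) (p ^ 2) n2' *
    ∑ k ∈ Finset.Icc (n2' - n2) (min n1 (min n3 n2')),
      qPoch ((p ^ (2 * n1))⁻¹) (p ^ 2) k * qPoch ((p ^ (2 * n3))⁻¹) (p ^ 2) k *
        qPoch ((p ^ (2 * n2'))⁻¹) (p ^ 2) k *
        qPoch (p ^ (2 * (n2 + k + 1) - 2 * n2')) (p ^ 2) (n2' - k) * p ^ (2 * k) /
        qPoch (p ^ 2) (p ^ 2) k

/-- The matrix element `R^{n'₁,n'₂,n'₃}_{n₁,n₂,n₃}` of the 3d R matrix. -/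
noncomputable def Rmat (p : ℝ) (n1 n2 n3 n1' n2' n3' : ℕ) : ℝ :=
  Real.sqrt ((qPoch (p ^ 2) (p ^ 2) n1' * qPoch (p ^ 2) (p ^ 2) n2' * qPoch (p ^ 2) (p ^ 2) n3') /
      (qPoch (p ^ 2) (p ^ 2) n1 * qPoch (p ^ 2) (p ^ 2) n2 * qPoch (p ^ 2) (p ^ 2) n3)) *
    (if n1 + n2 = n1' + n2' ∧ n2 + n3 = n2' + n3' then (1 : ℝ) else 0) *
    Rbar p n1 n2 n3 n1' n2' n3'

/-!
With `q = p²`, the closed forms `(q⁻ⁿ; q)ₖ = (-1)ᵏ q^(k choose 2 - nk) (q; q)ₙ / (q; q)ₙ₋ₖ` and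
`(q^(a+1); q)ⱼ = (q; q)ₐ₊ⱼ / (q; q)ₐ` turn `R̄^{n'}_{n}` into `(q;q)_{n₁}(q;q)_{n₂}(q;q)_{n₃}` times
a sum `Rsum` of terms with denominator `(q;q)ₖ (q;q)_{n₁-k} (q;q)_{n₃-k} (q;q)_{n'₂-k} (q;q)_{n₂-n'₂+k}`.
Under the conservation laws, shifting `k` by `n'₂ - n₂` maps the terms of `Rsum` for `(n, n')` onto
those for `(n', n)`, with the same sign and power of `p`. Hence `R^{n'}_{n}` is
`√(∏ (q;q)_{nᵢ} (q;q)_{n'ᵢ})` times a sum symmetric under `n ↔ n'` and under `n₁ ↔ n₃`.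
-/

open Finset

lemma qPoch_succ (a q : ℝ) (m : ℕ) : qPoch a q (m + 1) = qPoch a q m * (1 - a * q ^ m) :=
  prod_range_succ _ _

lemma qPoch_add (a q : ℝ) (m n : ℕ) :
    qPoch a q (m + n) = qPoch a q m * qPoch (a * q ^ m) q n := by
  simp only [qPoch, prod_range_add, pow_add, mul_assoc]

lemma qPoch_pos {a q : ℝ} (ha0 : 0 ≤ a) (ha1 : a < 1) (hq0 : 0 ≤ q) (hq1 : q ≤ 1) (m : ℕ) :
    0 < qPoch a q m :=
  prod_pos fun _ _ => sub_pos.2 <| (mul_le_of_le_one_right ha0 (pow_le_one₀ hq0 hq1)).trans_lt ha1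

lemma qPoch_self_ne_zero {q : ℝ} (hq0 : 0 ≤ q) (hq1 : q ≠ 1) (m : ℕ) : qPoch q q m ≠ 0 :=
  prod_ne_zero_iff.2 fun i _ => by
    rw [← pow_succ', sub_ne_zero, ne_comm, Ne, pow_eq_one_iff_of_nonneg hq0 i.succ_ne_zero]
    exact hq1

lemma qPoch_self_mul_qPoch_pow_succ (q : ℝ) (a j : ℕ) :
    qPoch q q a * qPoch (q ^ (a + 1)) q j = qPoch q q (a + j) := by
  rw [qPoch_add, pow_succ']

lemma qPoch_inv_pow_mul {q : ℝ} (hq : q ≠ 0) {n k : ℕ} (hk : k ≤ n) :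
    qPoch (q ^ n)⁻¹ q k * qPoch q q (n - k) * q ^ (n * k) =
      (-1) ^ k * q ^ k.choose 2 * qPoch q q n := by
  induction k with
  | zero => simp [qPoch]
  | succ k ih =>
    have hsplit : qPoch q q (n - k) = qPoch q q (n - (k + 1)) * (1 - q ^ (n - k)) := by
      rw [show n - k = n - (k + 1) + 1 by omega, qPoch_succ, ← pow_succ']
    have hfactor : (1 - (q ^ n)⁻¹ * q ^ k) * q ^ n = -q ^ k * (1 - q ^ (n - k)) := by
      have : q ^ n = q ^ k * q ^ (n - k) := by rw [← pow_add]; congr 1; omega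
      rw [this]; field_simp; ring
    have h := ih (by omega)
    rw [hsplit] at h
    rw [qPoch_succ, Nat.choose_succ_succ', Nat.choose_one_right]
    linear_combination (-q ^ k) * h +
      qPoch (q ^ n)⁻¹ q k * qPoch q q (n - (k + 1)) * q ^ (n * k) * hfactor

-- Only evaluated at `n'₂ - n₂ ≤ k ≤ min n₁ (min n₃ n'₂)`, where none of the ℕ-subtractions truncate.
noncomputable def Rsummand (p : ℝ) (n1 n2 n3 n2' k : ℕ) : ℝ :=
  (-1) ^ (n2' + k) *
      p ^ (n1 * n3 + n2' * (n1 + n3 + 1) + 3 * k ^ 2 - k - 2 * k * (n1 + n3 + n2') : ℤ) /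
    (qPoch (p ^ 2) (p ^ 2) k * qPoch (p ^ 2) (p ^ 2) (n1 - k) * qPoch (p ^ 2) (p ^ 2) (n3 - k) *
      qPoch (p ^ 2) (p ^ 2) (n2' - k) * qPoch (p ^ 2) (p ^ 2) (n2 + k - n2'))

noncomputable def Rsum (p : ℝ) (n1 n2 n3 n2' : ℕ) : ℝ :=
  ∑ k ∈ Icc (n2' - n2) (min n1 (min n3 n2')), Rsummand p n1 n2 n3 n2' k

lemma Rbar_eq_mul_Rsum {p : ℝ} (hp : p ≠ 0) (hp1 : p ^ 2 ≠ 1) (n1 n2 n3 n1' n2' n3' : ℕ) :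
    Rbar p n1 n2 n3 n1' n2' n3' =
      qPoch (p ^ 2) (p ^ 2) n1 * qPoch (p ^ 2) (p ^ 2) n2 * qPoch (p ^ 2) (p ^ 2) n3 *
        Rsum p n1 n2 n3 n2' := by
  rw [Rbar, Rsum, mul_sum, mul_sum]
  refine sum_congr rfl fun k hk => ?_
  obtain ⟨hk0, hk1⟩ := mem_Icc.1 hk
  simp only [le_min_iff] at hk1
  have hq0 : p ^ 2 ≠ 0 := pow_ne_zero 2 hp
  have hf := qPoch_self_ne_zero (sq_nonneg p) hp1
  have hinv (n : ℕ) (hkn : k ≤ n) : qPoch (p ^ (2 * n))⁻¹ (p ^ 2) k =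
      (-1) ^ k * (p ^ 2) ^ k.choose 2 * qPoch (p ^ 2) (p ^ 2) n /
        (qPoch (p ^ 2) (p ^ 2) (n - k) * (p ^ 2) ^ (n * k)) := by
    rw [eq_div_iff (mul_ne_zero (hf _) (pow_ne_zero _ hq0)), ← mul_assoc, pow_mul,
      qPoch_inv_pow_mul hq0 hkn]
  have hshift : qPoch (p ^ (2 * (n2 + k + 1) - 2 * n2')) (p ^ 2) (n2' - k) =
      qPoch (p ^ 2) (p ^ 2) n2 / qPoch (p ^ 2) (p ^ 2) (n2 + k - n2') := by
    rw [eq_div_iff (hf _), mul_comm,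
      show 2 * (n2 + k + 1) - 2 * n2' = 2 * (n2 + k - n2' + 1) by omega, pow_mul,
      qPoch_self_mul_qPoch_pow_succ, show n2 + k - n2' + (n2' - k) = n2 by omega]
  have hpow : p ^ (n1 * n3 + n2' * (n1 + n3 + 1) + 3 * k ^ 2 - k - 2 * k * (n1 + n3 + n2') : ℤ) =
      p ^ (n1 * n3 + n2' * (n1 + n3 + 1)) * p ^ (2 * k) * ((p ^ 2) ^ k.choose 2) ^ 3 /
        ((p ^ 2) ^ (n1 * k) * (p ^ 2) ^ (n3 * k) * (p ^ 2) ^ (n2' * k)) := by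
    have hc : (2 * k.choose 2 : ℤ) = k ^ 2 - k := by
      have := Nat.cast_choose_two ℚ k
      qify; rw [this]; ring
    simp only [← pow_mul, ← pow_add]
    rw [← zpow_natCast, ← zpow_natCast, ← zpow_sub₀ hp]
    congr 1
    push_cast
    linear_combination (-3) * hc
  have hsign : (-1 : ℝ) ^ (n2' + k) = (-1) ^ n2' * ((-1) ^ k) ^ 3 := by
    rw [pow_add, ← pow_mul, mul_comm k 3, pow_mul]; norm_num
  rw [hinv n1 hk1.1, hinv n3 hk1.2.1, hinv n2' hk1.2.2, hshift, Rsummand, hpow, hsign]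
  field_simp [hf]

lemma Rsummand_shift (p : ℝ) (n1 n2 n3 d j : ℕ) :
    Rsummand p (n1 + d) n2 (n3 + d) (n2 + d) (j + d) = Rsummand p n1 (n2 + d) n3 n2 j := by
  have hsign : (-1 : ℝ) ^ (n2 + d + (j + d)) = (-1) ^ (n2 + j) := by
    rw [show n2 + d + (j + d) = n2 + j + 2 * d by ring, pow_add, pow_mul]; norm_num
  rw [Rsummand, Rsummand, hsign, show n1 + d - (j + d) = n1 - j by omega,
    show n3 + d - (j + d) = n3 - j by omega, show n2 + d - (j + d) = n2 - j by omega,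
    show n2 + (j + d) - (n2 + d) = j by omega, show n2 + d + j - n2 = j + d by omega]
  congr 1
  · congr 2; push_cast; ring
  · ring

lemma Rsum_symm_of_le {p : ℝ} {n1 n2 n3 n1' n2' n3' : ℕ} (h12 : n1 + n2 = n1' + n2')
    (h23 : n2 + n3 = n2' + n3') (hle : n2 ≤ n2') :
    Rsum p n1 n2 n3 n2' = Rsum p n1' n2' n3' n2 := by
  obtain ⟨d, rfl⟩ := Nat.exists_eq_add_of_le hle
  obtain rfl : n1 = n1' + d := by omega
  obtain rfl : n3 = n3' + d := by omega
  have hIcc : Icc (n2 + d - n2) (min (n1' + d) (min (n3' + d) (n2 + d))) =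
      (Icc (n2 - (n2 + d)) (min n1' (min n3' n2))).map (addRightEmbedding d) := by
    rw [map_add_right_Icc]; congr 1 <;> omega
  rw [Rsum, Rsum, hIcc, sum_map]
  exact sum_congr rfl fun j _ => Rsummand_shift p n1' n2 n3' d j

lemma Rsum_symm {p : ℝ} {n1 n2 n3 n1' n2' n3' : ℕ} (h12 : n1 + n2 = n1' + n2')
    (h23 : n2 + n3 = n2' + n3') : Rsum p n1 n2 n3 n2' = Rsum p n1' n2' n3' n2 := by
  rcases le_total n2 n2' with hle | hle
  · exact Rsum_symm_of_le h12 h23 hle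
  · exact (Rsum_symm_of_le h12.symm h23.symm hle).symm

lemma Rsum_comm (p : ℝ) (n1 n2 n3 n2' : ℕ) : Rsum p n1 n2 n3 n2' = Rsum p n3 n2 n1 n2' := by
  rw [Rsum, Rsum, min_left_comm]
  refine sum_congr rfl fun k _ => ?_
  rw [Rsummand, Rsummand]
  congr 2
  · congr 1; ring
  · ring

lemma sqrt_div_mul_self {a : ℝ} (ha : 0 < a) (b : ℝ) : √(b / a) * a = √(a * b) := by
  rw [← Real.sqrt_mul_self ha.le, ← Real.sqrt_mul' _ (mul_self_nonneg a), Real.sqrt_mul_self ha.le]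
  congr 1
  field_simp

lemma Rmat_eq {p : ℝ} (hp : 0 < p) (hp1 : p < 1) (n1 n2 n3 n1' n2' n3' : ℕ) :
    Rmat p n1 n2 n3 n1' n2' n3' =
      √(qPoch (p ^ 2) (p ^ 2) n1 * qPoch (p ^ 2) (p ^ 2) n2 * qPoch (p ^ 2) (p ^ 2) n3 *
          (qPoch (p ^ 2) (p ^ 2) n1' * qPoch (p ^ 2) (p ^ 2) n2' * qPoch (p ^ 2) (p ^ 2) n3')) *
        (if n1 + n2 = n1' + n2' ∧ n2 + n3 = n2' + n3' then (1 : ℝ) else 0) * Rsum p n1 n2 n3 n2' := by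
  have hq0 : 0 ≤ p ^ 2 := sq_nonneg p
  have hq1 : p ^ 2 < 1 := by nlinarith
  have hf := qPoch_pos hq0 hq1 hq0 hq1.le
  rw [Rmat, Rbar_eq_mul_Rsum hp.ne' hq1.ne,
    ← sqrt_div_mul_self (mul_pos (mul_pos (hf n1) (hf n2)) (hf n3))]
  ring

/-- The matrix elements of the 3d R matrix enjoy the symmetries
`R^{n'₁,n'₂,n'₃}_{n₁,n₂,n₃} = R^{n₁,n₂,n₃}_{n'₁,n'₂,n'₃} = R^{n'₃,n'₂,n'₁}_{n₃,n₂,n₁}`. -/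
theorem Rmat_symmetry (p : ℝ) (hp : 0 < p) (hp1 : p < 1) (n1 n2 n3 n1' n2' n3' : ℕ) :
    Rmat p n1 n2 n3 n1' n2' n3' = Rmat p n1' n2' n3' n1 n2 n3 ∧
    Rmat p n1 n2 n3 n1' n2' n3' = Rmat p n3 n2 n1 n3' n2' n1' := by
  simp only [Rmat_eq hp hp1]
  constructor
  · by_cases h : n1 + n2 = n1' + n2' ∧ n2 + n3 = n2' + n3'
    · rw [if_pos h, if_pos ⟨h.1.symm, h.2.symm⟩, Rsum_symm h.1 h.2, mul_comm (_ * _ * _)]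
    · rw [if_neg h, if_neg fun h' => h ⟨h'.1.symm, h'.2.symm⟩]
      simp
  · rw [Rsum_comm]
    congr 2
    · congr 1; ring
    · exact if_congr (by omega) rfl rfl
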